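/- A norm ‖·‖ on M_n(ℂ) is an M-norm if and only if its dual norm ‖·‖_* is an L-norm. -/

import Mathlib

open Matrix BigOperators ComplexOrder

/-- Square complex matrices. -/
abbrev Mat (n : ℕ) := Matrix (Fin n) (Fin n) ℂ

/-- `N` is a norm on `Mat n`. -/
def IsMatrixNorm {n : ℕ} (N : Mat n → ℝ) : Prop :=
  (∀ A, N A = 0 ↔ A = 0) ∧
  (∀ (c : ℂ) (A : Mat n), N (c • A) = ‖c‖ * N A) ∧
  (∀ A B : Mat n, N (A + B) ≤ N A + N B)

/-- A set of matrices is C*-convex. -/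
def CStarConvex {n : ℕ} (K : Set (Mat n)) : Prop :=
  ∀ (k : ℕ) (C A : Fin k → Mat n), (∀ i, A i ∈ K) →
    (∑ i, (C i)ᴴ * C i = 1) → (∑ i, (C i)ᴴ * A i * C i) ∈ K

/-- `N` is an M-norm. -/
def IsMNorm {n : ℕ} (N : Mat n → ℝ) : Prop :=
  ∀ (k : ℕ) (C X : Fin k → Mat n), (∑ i, (C i)ᴴ * C i = 1) →
    N (∑ i, (C i)ᴴ * X i * C i) ≤ ⨆ i, N (X i)

/-- `N` is an L-norm. -/
def IsLNorm {n : ℕ} (N : Mat n → ℝ) : Prop :=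
  ∀ (k : ℕ) (C : Fin k → Mat n) (X : Mat n), (∑ i, (C i)ᴴ * C i = 1) →
    ∑ i, N (C i * X * (C i)ᴴ) ≤ N X

/-- The dual norm with respect to the pairing `⟨Y|X⟩ = Tr(Yᴴ X)`. -/
noncomputable def dualNorm {n : ℕ} (N : Mat n → ℝ) (Y : Mat n) : ℝ :=
  sSup {r | ∃ X : Mat n, N X ≤ 1 ∧ r = ‖(Yᴴ * X).trace‖}

/-- The operator (spectral) norm of a matrix. -/
noncomputable def opNorm {n : ℕ} (A : Mat n) : ℝ :=
  ‖Matrix.toEuclideanCLM (𝕜 := ℂ) (n := Fin n) A‖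

/-- The trace norm `‖A‖₁ = Tr((AᴴA)^{1/2})`. -/
noncomputable def traceNorm {n : ℕ} (A : Mat n) : ℝ :=
  ((Matrix.posSemidef_conjTranspose_mul_self A).1.eigenvectorUnitary.1 *
    diagonal ((fun r : ℝ => (r : ℂ)) ∘ Real.sqrt ∘ (Matrix.posSemidef_conjTranspose_mul_self A).1.eigenvalues) *
    (star (Matrix.posSemidef_conjTranspose_mul_self A).1.eigenvectorUnitary : Mat n)).trace.re

/-- The numerical radius. -/
noncomputable def numRadius {n : ℕ} (A : Mat n) : ℝ :=
  sSup {r | ∃ x : EuclideanSpace ℂ (Fin n), ‖x‖ = 1 ∧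
    r = ‖inner ℂ x (Matrix.toEuclideanCLM (𝕜 := ℂ) (n := Fin n) A x)‖}

/-! The trace pairing identifies `Mat n` with its own dual, and under this identification the
adjoint of `(Xᵢ)ᵢ ↦ ∑ Cᵢᴴ Xᵢ Cᵢ` is `Y ↦ (Cᵢ Y Cᵢᴴ)ᵢ`, because
`Tr(Yᴴ Cᵢᴴ Xᵢ Cᵢ) = Tr((Cᵢ Y Cᵢᴴ)ᴴ Xᵢ)`. The M-property says that the first map is a contraction
from the `ℓ^∞`-sum of copies of `(Mat n, N)` to `(Mat n, N)`, the L-property for the dual norm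
that the second is a contraction from `(Mat n, N_*)` to the `ℓ¹`-sum of copies of it, and a map
is a contraction iff its adjoint is. In finite dimension both directions are concrete: `N_*` is
attained on the unit ball of `N` (compactness), and `N` is attained on the unit ball of `N_*`
(Hahn–Banach).
-/

namespace Matrix

variable {m R : Type*} [Fintype m] [CommSemiring R] [StarRing R]

theorem trace_conjTranspose_mul_conjTranspose_mul_mul (Y C X : Matrix m m R) :
    (Yᴴ * (Cᴴ * X * C)).trace = ((C * Y * Cᴴ)ᴴ * X).trace := by
  simp only [conjTranspose_mul, conjTranspose_conjTranspose, ← Matrix.mul_assoc]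
  rw [trace_mul_comm]
  simp only [Matrix.mul_assoc]

theorem exists_trace_conjTranspose_mul_eq [DecidableEq m] (f : Matrix m m R →ₗ[R] R) :
    ∃ Y : Matrix m m R, ∀ X, (Yᴴ * X).trace = f X := by
  refine ⟨of fun i j => star (f (single i j 1)), fun X => ?_⟩
  have hX : X = ∑ i, ∑ j, X i j • single i j (1 : R) := by
    conv_lhs => rw [matrix_eq_sum_single X]
    simp only [smul_single, smul_eq_mul, mul_one]
  conv_rhs => rw [hX]
  simp only [map_sum, map_smul, trace, diag, mul_apply, conjTranspose_apply, of_apply, star_star,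
    smul_eq_mul]
  rw [Finset.sum_comm]
  simp only [mul_comm]

end Matrix

theorem IsMatrixNorm.map_neg {n : ℕ} {N : Mat n → ℝ} (hN : IsMatrixNorm N) (A : Mat n) :
    N (-A) = N A := by
  simpa using hN.2.1 (-1) A

/-- `Mat n` with `N` as its norm, so that Hahn–Banach and the compactness of the unit ball of a
finite-dimensional normed space apply to `N`. -/
def MatWithNorm {n : ℕ} (_N : Mat n → ℝ) : Type := Mat n

namespace MatWithNorm

variable {n : ℕ} {N : Mat n → ℝ}

instance : AddCommGroup (MatWithNorm N) := inferInstanceAs (AddCommGroup (Mat n))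

instance : Module ℂ (MatWithNorm N) := inferInstanceAs (Module ℂ (Mat n))

instance : FiniteDimensional ℂ (MatWithNorm N) := inferInstanceAs (FiniteDimensional ℂ (Mat n))

def ofMat : Mat n ≃ₗ[ℂ] MatWithNorm N := LinearEquiv.refl ℂ (Mat n)

variable [hN : Fact (IsMatrixNorm N)]

instance : NormedAddCommGroup (MatWithNorm N) :=
  AddGroupNorm.toNormedAddCommGroup
    { toFun := N
      map_zero' := (hN.out.1 0).2 rfl
      add_le' := hN.out.2.2
      neg' := hN.out.map_neg
      eq_zero_of_map_eq_zero' := fun A => (hN.out.1 A).1 }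

instance : NormedSpace ℂ (MatWithNorm N) := ⟨fun c A => (hN.out.2.1 c A).le⟩

theorem norm_ofMat (X : Mat n) : ‖(ofMat X : MatWithNorm N)‖ = N X := rfl

noncomputable def tracePairing (Y : Mat n) : StrongDual ℂ (MatWithNorm N) :=
  LinearMap.toContinuousLinearMap
    (traceLinearMap (Fin n) ℂ ℂ ∘ₗ LinearMap.mulLeft ℂ Yᴴ ∘ₗ ofMat.symm.toLinearMap)

theorem tracePairing_ofMat (Y X : Mat n) :
    tracePairing Y (ofMat X : MatWithNorm N) = (Yᴴ * X).trace := rfl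

theorem dualNorm_eq_norm_tracePairing (Y : Mat n) :
    dualNorm N Y = ‖(tracePairing Y : StrongDual ℂ (MatWithNorm N))‖ := by
  rw [← ContinuousLinearMap.sSup_unitClosedBall_eq_norm, dualNorm]
  congr 1
  ext r
  exact ⟨fun ⟨X, hX, hr⟩ => ⟨ofMat X, mem_closedBall_zero_iff.2 hX, hr.symm⟩,
    fun ⟨X, hX, hr⟩ => ⟨ofMat.symm X, mem_closedBall_zero_iff.1 hX, hr.symm⟩⟩

end MatWithNorm

namespace IsMatrixNorm

open MatWithNorm

variable {n : ℕ} {N : Mat n → ℝ}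

theorem nonneg (hN : IsMatrixNorm N) (X : Mat n) : 0 ≤ N X := by
  have := Fact.mk hN
  simpa only [norm_ofMat] using norm_nonneg (ofMat X : MatWithNorm N)

theorem dualNorm_nonneg (hN : IsMatrixNorm N) (Y : Mat n) : 0 ≤ dualNorm N Y := by
  have := Fact.mk hN
  rw [dualNorm_eq_norm_tracePairing]
  exact norm_nonneg _

theorem norm_trace_le_dualNorm_mul (hN : IsMatrixNorm N) (Y X : Mat n) :
    ‖(Yᴴ * X).trace‖ ≤ dualNorm N Y * N X := by
  have := Fact.mk hN
  simpa only [dualNorm_eq_norm_tracePairing, tracePairing_ofMat, norm_ofMat] using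
    (tracePairing Y).le_opNorm (ofMat X : MatWithNorm N)

theorem exists_trace_eq_dualNorm (hN : IsMatrixNorm N) (Y : Mat n) :
    ∃ Z, N Z ≤ 1 ∧ (Yᴴ * Z).trace = dualNorm N Y := by
  have := Fact.mk hN
  set f : StrongDual ℂ (MatWithNorm N) := tracePairing Y
  have hmax : ‖f‖ ∈ (fun X => ‖f X‖) '' Metric.closedBall 0 1 := by
    rw [← ContinuousLinearMap.sSup_unitClosedBall_eq_norm]
    exact ((isCompact_closedBall 0 1).image (by fun_prop)).sSup_mem
      ((Metric.nonempty_closedBall.2 zero_le_one).image _)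
  obtain ⟨Z, hZ, hfZ⟩ := hmax
  -- a unimodular multiple of the maximiser makes the pairing real
  obtain ⟨c, hc, hcZ⟩ := Complex.exists_norm_eq_mul_self (f Z)
  refine ⟨c • ofMat.symm Z, ?_, ?_⟩
  · rw [hN.2.1, hc, one_mul]
    exact mem_closedBall_zero_iff.1 hZ
  · rw [dualNorm_eq_norm_tracePairing, ← hfZ, hcZ]
    exact f.map_smul c Z

theorem exists_dualNorm_le_one_trace_eq (hN : IsMatrixNorm N) (Z : Mat n) :
    ∃ Y, dualNorm N Y ≤ 1 ∧ (Yᴴ * Z).trace = N Z := by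
  have := Fact.mk hN
  obtain ⟨g, hg, hgZ⟩ := exists_dual_vector'' ℂ (ofMat Z : MatWithNorm N)
  obtain ⟨Y, hY⟩ := exists_trace_conjTranspose_mul_eq (g.toLinearMap ∘ₗ ofMat.toLinearMap)
  have hYg : tracePairing Y = g := ContinuousLinearMap.ext fun X => hY (ofMat.symm X)
  exact ⟨Y, by rwa [dualNorm_eq_norm_tracePairing, hYg], hY Z ▸ hgZ⟩

theorem isLNorm_dualNorm_of_isMNorm (hN : IsMatrixNorm N) (hM : IsMNorm N) :
    IsLNorm (dualNorm N) := by
  intro k C X hC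
  choose Z hZ hZX using fun i => hN.exists_trace_eq_dualNorm (C i * X * (C i)ᴴ)
  set W := ∑ i, (C i)ᴴ * Z i * C i
  have hW : N W ≤ 1 := (hM k C Z hC).trans (Real.iSup_le hZ zero_le_one)
  have hXW : (Xᴴ * W).trace = ((∑ i, dualNorm N (C i * X * (C i)ᴴ) : ℝ) : ℂ) := by
    simp only [W, Matrix.mul_sum, trace_sum, trace_conjTranspose_mul_conjTranspose_mul_mul, hZX,
      Complex.ofReal_sum]
  calc ∑ i, dualNorm N (C i * X * (C i)ᴴ) = ‖(Xᴴ * W).trace‖ := by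
        rw [hXW, Complex.norm_real, Real.norm_of_nonneg
          (Finset.sum_nonneg fun i _ => hN.dualNorm_nonneg _)]
    _ ≤ dualNorm N X * N W := hN.norm_trace_le_dualNorm_mul X W
    _ ≤ dualNorm N X := mul_le_of_le_one_right (hN.dualNorm_nonneg X) hW

theorem isMNorm_of_isLNorm_dualNorm (hN : IsMatrixNorm N) (hL : IsLNorm (dualNorm N)) :
    IsMNorm N := by
  intro k C X hC
  set s := ⨆ i, N (X i)
  have hXs : ∀ i, N (X i) ≤ s := le_ciSup (Set.finite_range _).bddAbove
  have hs : 0 ≤ s := Real.iSup_nonneg fun i => hN.nonneg (X i)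
  obtain ⟨Y, hY, hYZ⟩ := hN.exists_dualNorm_le_one_trace_eq (∑ i, (C i)ᴴ * X i * C i)
  calc N (∑ i, (C i)ᴴ * X i * C i) = ‖(Yᴴ * ∑ i, (C i)ᴴ * X i * C i).trace‖ := by
        rw [hYZ, Complex.norm_real, Real.norm_of_nonneg (hN.nonneg _)]
    _ = ‖∑ i, ((C i * Y * (C i)ᴴ)ᴴ * X i).trace‖ := by
        simp only [Matrix.mul_sum, trace_sum, trace_conjTranspose_mul_conjTranspose_mul_mul]
    _ ≤ ∑ i, dualNorm N (C i * Y * (C i)ᴴ) * N (X i) :=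
        (norm_sum_le _ _).trans (Finset.sum_le_sum fun i _ => hN.norm_trace_le_dualNorm_mul _ _)
    _ ≤ (∑ i, dualNorm N (C i * Y * (C i)ᴴ)) * s := by
        rw [Finset.sum_mul]
        gcongr with i
        · exact hN.dualNorm_nonneg _
        · exact hXs i
    _ ≤ dualNorm N Y * s := by gcongr; exact hL k C Y hC
    _ ≤ s := mul_le_of_le_one_left hs hY

end IsMatrixNorm

theorem isMNorm_iff_dual_isLNorm {n : ℕ} (N : Mat n → ℝ)
    (hN : IsMatrixNorm N) :
    IsMNorm N ↔ IsLNorm (dualNorm N) :=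
  ⟨hN.isLNorm_dualNorm_of_isMNorm, hN.isMNorm_of_isLNorm_dualNorm⟩
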